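/- arXiv:1912.04013 — 10 statements merged into one kernel-verified Lean document; each statement's English description precedes it below -/
import Mathlib

section
/- Let A be a real symmetric n×n matrix with A ≠ 0 satisfying A² = (tr(A)/2)·A. Then the eigenvalue tr(A)/2 of A has multiplicity exactly 2 and the eigenvalue 0 has multiplicity n−2, and moreover tr(A)² = 2·‖A‖², where ‖A‖² denotes the sum of squares of the entries of A. -/
/-!
Every eigenvalue `μ` of `A` satisfies `μ² = (t/2) μ` with `t = tr A`, so it is `0` or `t/2`.
Since `tr(A²) = ‖A‖²` and `A² = (t/2) A`, we get `‖A‖² = t²/2`, which is positive, so `t ≠ 0`.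
Writing `k` for the multiplicity of `t/2`, the trace is the sum of the eigenvalues, `t = k · t/2`,
hence `k = 2` and the remaining `n - 2` eigenvalues vanish.
-/

open Finset

theorem Finset.sum_eq_card_filter_smul_of_eq_zero_or_eq {ι M : Type*} [Fintype ι]
    [AddCommMonoid M] {f : ι → M} {c : M} [DecidablePred (f · = c)]
    (hf : ∀ i, f i = 0 ∨ f i = c) : ∑ i, f i = #{i | f i = c} • c := by
  rw [← sum_const, sum_filter]
  refine sum_congr rfl fun i _ => ?_
  rcases hf i with hi | hi <;> simp [hi]

theorem Finset.card_filter_eq_add_card_filter_eq_of_eq_or_eq {ι α : Type*} [Fintype ι]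
    {f : ι → α} {a b : α} [DecidablePred (f · = a)] [DecidablePred (f · = b)]
    (hab : a ≠ b) (hf : ∀ i, f i = a ∨ f i = b) :
    #{i | f i = a} + #{i | f i = b} = Fintype.card ι := by
  rw [← card_univ, ← card_filter_add_card_filter_not (s := univ) (f · = a)]
  congr 2
  refine filter_congr fun i _ => ?_
  rcases hf i with hi | hi <;> simp [hi, hab, hab.symm]

namespace Matrix

theorem trace_mul_transpose_self {m n : Type*} [Fintype m] [Fintype n] (A : Matrix m n ℝ) :
    (A * Aᵀ).trace = ∑ i, ∑ j, A i j ^ 2 := by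
  simp only [trace, diag_apply, mul_apply, transpose_apply, sq]

theorem IsHermitian.eigenvalues_eq_zero_or_eq_of_mul_self_eq_smul {𝕜 n : Type*} [RCLike 𝕜]
    [Fintype n] [DecidableEq n] {A : Matrix n n 𝕜} (hA : A.IsHermitian) {c : ℝ}
    (h : A * A = c • A) (i : n) : hA.eigenvalues i = 0 ∨ hA.eigenvalues i = c := by
  set μ := hA.eigenvalues i
  set v : n → 𝕜 := ⇑(hA.eigenvectorBasis i)
  have hv : v ≠ 0 := fun hv => (hA.eigenvectorBasis.orthonormal.ne_zero i)
    (by ext j; exact congrFun hv j)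
  have hAv : A *ᵥ v = μ • v := hA.mulVec_eigenvectorBasis i
  have hμ : (μ * μ) • v = (c * μ) • v := by
    rw [mul_smul, mul_smul, ← hAv, ← mulVec_smul, ← hAv, mulVec_mulVec, h, smul_mulVec]
  have hroot : μ * (μ - c) = 0 := by
    rw [mul_sub, sub_eq_zero, mul_comm μ c]
    exact smul_left_injective ℝ hv hμ
  rcases mul_eq_zero.mp hroot with h0 | hc
  · exact .inl h0
  · exact .inr (sub_eq_zero.mp hc)

end Matrix

open Matrix

open scoped Classical in
theorem stmt_1 (n : ℕ) (A : Matrix (Fin n) (Fin n) ℝ)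
    (hA : A.IsHermitian) (hA0 : A ≠ 0)
    (h : A * A = (A.trace / 2) • A) :
    (Finset.univ.filter fun i => hA.eigenvalues i = A.trace / 2).card = 2 ∧
    (Finset.univ.filter fun i => hA.eigenvalues i = 0).card = n - 2 ∧
    A.trace ^ 2 = 2 * ∑ i, ∑ j, (A i j) ^ 2 := by
  set t := A.trace
  have hAt : Aᵀ = A := by rw [← conjTranspose_eq_transpose_of_trivial]; exact hA
  have hsq : ∑ i, ∑ j, A i j ^ 2 = t / 2 * t := by
    rw [← trace_mul_transpose_self, hAt, h, trace_smul, smul_eq_mul]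
  have ht : t / 2 ≠ 0 := by
    have hpos := trace_mul_conjTranspose_self_eq_zero_iff.not.mpr hA0
    rw [conjTranspose_eq_transpose_of_trivial, trace_mul_transpose_self, hsq] at hpos
    exact left_ne_zero_of_mul hpos
  have hdich := hA.eigenvalues_eq_zero_or_eq_of_mul_self_eq_smul h
  have hcard : #{i | hA.eigenvalues i = t / 2} = 2 := by
    have hsum : t = ∑ i, hA.eigenvalues i := by simpa using hA.trace_eq_sum_eigenvalues
    rw [sum_eq_card_filter_smul_of_eq_zero_or_eq hdich, nsmul_eq_mul] at hsum
    have hk : (#{i | hA.eigenvalues i = t / 2} : ℝ) * (t / 2) = 2 * (t / 2) := by linarith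
    exact_mod_cast mul_right_cancel₀ ht hk
  refine ⟨hcard, ?_, by rw [hsq]; ring⟩
  have hsplit := card_filter_eq_add_card_filter_eq_of_eq_or_eq ht.symm hdich
  rw [hcard, Fintype.card_fin] at hsplit
  omega
end

section
/- Let α be a nonzero vector in ℝⁿ and let B be a real symmetric n×n matrix such that αᵢ B_{ℓj} + αⱼ B_{iℓ} = 0 for all indices i, j, ℓ. Then B = 0. -/
theorem stmt_2 (n : ℕ) (α : Fin n → ℝ) (hα : α ≠ 0)
    (B : Matrix (Fin n) (Fin n) ℝ) (hB : B.IsSymm)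
    (h : ∀ i j ℓ, α i * B ℓ j + α j * B i ℓ = 0) :
    B = 0 := by
  obtain ⟨k, hk⟩ := Function.ne_iff.mp hα
  have hcol : ∀ ℓ, B ℓ k = 0 := by
    intro ℓ
    have h1 := h k k ℓ
    have h2 : B k ℓ = B ℓ k := by
      have := congrFun (congrFun hB.symm k) ℓ; simpa [Matrix.transpose_apply] using this
    rw [h2] at h1
    have : α k * B ℓ k = 0 := by linarith
    exact (mul_eq_zero.mp this).resolve_left hk
  ext i ℓ
  have h1 := h i k ℓ
  rw [hcol ℓ] at h1
  have : α k * B i ℓ = 0 := by linarith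
  simpa using (mul_eq_zero.mp this).resolve_left hk
end

section
/- Let B be a real symmetric n×n matrix and α ∈ ℝⁿ with α ≠ 0. If 2 α_ℓ B_{ij} + α_i B_{ℓj} + α_j B_{iℓ} = 0 for all i, j, ℓ, then B = 0. -/
theorem stmt_3 (n : ℕ) (α : Fin n → ℝ) (hα : α ≠ 0)
    (B : Matrix (Fin n) (Fin n) ℝ) (hB : B.IsSymm)
    (h : ∀ i j ℓ, 2 * α ℓ * B i j + α i * B ℓ j + α j * B i ℓ = 0) :
    B = 0 := by
  obtain ⟨ℓ₀, hℓ₀⟩ : ∃ ℓ₀, α ℓ₀ ≠ 0 := by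
    by_contra hc
    push_neg at hc
    exact hα (funext hc)
  have hsym : ∀ i j, B i j = B j i := fun i j => Matrix.IsSymm.apply hB j i
  have hdiag : B ℓ₀ ℓ₀ = 0 := by
    have := h ℓ₀ ℓ₀ ℓ₀
    have h4 : 4 * (α ℓ₀ * B ℓ₀ ℓ₀) = 0 := by linarith
    have := mul_eq_zero.1 (by linarith : α ℓ₀ * B ℓ₀ ℓ₀ = 0)
    tauto
  have hrow : ∀ j, B ℓ₀ j = 0 := by
    intro j
    have := h ℓ₀ j ℓ₀
    rw [hdiag] at this
    have h3 : α ℓ₀ * B ℓ₀ j = 0 := by linarith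
    have := mul_eq_zero.1 h3
    tauto
  ext i j
  have := h i j ℓ₀
  rw [hrow j, hsym i ℓ₀, hrow i] at this
  have h2 : α ℓ₀ * B i j = 0 := by linarith
  have := mul_eq_zero.1 h2
  simpa using (by tauto : B i j = 0)
end

section
/- Let n > 3. There is no real symmetric n×n matrix R ≠ 0 which simultaneously satisfies (i) R² = (tr(R)/2)·R (the Ricci recurrent eigenvalue structure) and (ii) R − a·I has rank at most one for some real number a (the quasi Einstein condition). -/
/-!
If `R * R = c • R` with `c = tr R / 2`, then either `c = 0`, so `Rᵀ * R = R * R = 0` and `R = 0`,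
or `c⁻¹ • R` is idempotent, whose rank equals its trace `2`. On the other hand `a • 1` is the sum
of `R` and `-(R - a • 1)`, so it has rank at most `2 + 1 < n`; hence `a = 0`, and then `R` itself
would have rank at most one.
-/

namespace Matrix

variable {m n K : Type*} [Fintype n]

theorem rank_add_le [Field K] (A B : Matrix m n K) : (A + B).rank ≤ A.rank + B.rank := by
  rw [rank, rank, rank, mulVecLin_add]
  refine (Submodule.finrank_mono ?_).trans (Submodule.finrank_add_le_finrank_add_finrank _ _)
  rintro _ ⟨v, rfl⟩
  exact Submodule.add_mem_sup ⟨v, rfl⟩ ⟨v, rfl⟩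

theorem rank_neg [Field K] (A : Matrix m n K) : (-A).rank = A.rank := by
  simpa using rank_smul_of_mem_nonZeroDivisors A (c := (-1 : K)) (by simp)

theorem IsSymm.eq_zero_of_mul_self_eq_zero [PartialOrder K] [NonUnitalRing K] [StarRing K]
    [StarOrderedRing K] [NoZeroDivisors K] [TrivialStar K] {A : Matrix n n K} (hA : A.IsSymm)
    (h : A * A = 0) : A = 0 := by
  nth_rw 1 [← hA.eq] at h
  rwa [← conjTranspose_eq_transpose_of_trivial, conjTranspose_mul_self_eq_zero] at h

variable [DecidableEq n]

theorem card_le_rank_add_rank_sub_smul_one [Field K] (A : Matrix n n K) {a : K} (ha : a ≠ 0) :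
    Fintype.card n ≤ A.rank + (A - a • 1).rank := by
  classical
  calc Fintype.card n = (a • 1 : Matrix n n K).rank := by
        rw [smul_one_eq_diagonal, rank_diagonal]; simp [ha]
    _ = (A + -(A - a • 1)).rank := by rw [neg_sub, add_sub_cancel]
    _ ≤ A.rank + (A - a • 1).rank := (rank_add_le _ _).trans_eq (by rw [rank_neg])

theorem trace_eq_rank_of_isIdempotentElem [Field K] {P : Matrix n n K}
    (hP : IsIdempotentElem P) : P.trace = P.rank := by
  have hP' : IsIdempotentElem (toLin' P) := hP.map toLinAlgEquiv'
  rw [← trace_toLin'_eq, (LinearMap.IsIdempotentElem.isProj_range _ hP').trace]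
  rfl

theorem trace_eq_rank_mul_of_mul_self_eq_smul [Field K] {A : Matrix n n K} {c : K} (hc : c ≠ 0)
    (hA : A * A = c • A) : A.trace = A.rank * c := by
  have hP : IsIdempotentElem (c⁻¹ • A) := by
    rw [IsIdempotentElem, smul_mul_smul_comm, hA, smul_smul, mul_assoc, inv_mul_cancel₀ hc, mul_one]
  have := trace_eq_rank_of_isIdempotentElem hP
  rw [trace_smul, smul_eq_mul, rank_smul_of_mem_nonZeroDivisors _ (by simpa using hc)] at this
  rw [← this]
  field_simp

end Matrix

open Matrix

theorem stmt_6 (n : ℕ) (hn : 3 < n) :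
    ¬ ∃ R : Matrix (Fin n) (Fin n) ℝ, R.IsSymm ∧ R ≠ 0 ∧
      R * R = (R.trace / 2) • R ∧
      ∃ a : ℝ, (R - a • (1 : Matrix (Fin n) (Fin n) ℝ)).rank ≤ 1 := by
  rintro ⟨R, hsymm, hne, hsq, a, hrank⟩
  have htr : R.trace ≠ 0 := fun h0 ↦
    hne (hsymm.eq_zero_of_mul_self_eq_zero (by simpa [h0] using hsq))
  have hrankR : R.rank = 2 := by
    have h := trace_eq_rank_mul_of_mul_self_eq_smul (div_ne_zero htr two_ne_zero) hsq
    field_simp at h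
    exact_mod_cast h.symm
  rcases eq_or_ne a 0 with rfl | ha
  · simp only [zero_smul, sub_zero] at hrank
    omega
  · have := card_le_rank_add_rank_sub_smul_one R ha
    rw [Fintype.card_fin] at this
    omega
end

section
/- Let R be a real symmetric 3×3 matrix with R ≠ 0 satisfying R² = (tr(R)/2)·R, and let ω be a nonzero vector with Rω = 0. Then R = (tr(R)/2)·(I − ω ωᵀ/‖ω‖²). -/
/-!
Put `c = tr R / 2`. If `c = 0` then `R * R = 0`, which forces the symmetric `R` to vanish since
`tr (Rᵀ R)` is the sum of the squares of its entries. So `P = R / c` is a symmetric idempotent of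
trace `2` with `P ω = 0`, and `Q = ω ωᵀ / ‖ω‖²` is a symmetric idempotent of trace `1` orthogonal
to it. Then `1 - P - Q` is a symmetric idempotent of trace `3 - 2 - 1 = 0`, hence zero.
-/

open Matrix

namespace Matrix

variable {n : Type*} [Fintype n]

section Ordered

variable {R : Type*} [CommRing R] [PartialOrder R] [StarRing R] [TrivialStar R]
  [StarOrderedRing R] [NoZeroDivisors R]

theorem IsSymm.eq_zero_of_trace_mul_self_eq_zero {A : Matrix n n R} (hA : A.IsSymm)
    (h : (A * A).trace = 0) : A = 0 := by
  rwa [← trace_conjTranspose_mul_self_eq_zero_iff, conjTranspose_eq_transpose_of_trivial, hA.eq]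

theorem add_eq_one_of_isIdempotentElem_of_trace_add_eq_card [DecidableEq n]
    {P Q : Matrix n n R} (hPs : P.IsSymm) (hQs : Q.IsSymm)
    (hP : IsIdempotentElem P) (hQ : IsIdempotentElem Q) (hPQ : P * Q = 0) (hQP : Q * P = 0)
    (htr : P.trace + Q.trace = Fintype.card n) : P + Q = 1 := by
  have hM : IsIdempotentElem (1 - (P + Q)) := (hP.add hQ (by rw [hPQ, hQP, add_zero])).one_sub
  have hMs : (1 - (P + Q)).IsSymm := isSymm_one.sub (hPs.add hQs)
  have hMtr : (1 - (P + Q)).trace = 0 := by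
    rw [trace_sub, trace_add, htr, trace_one, sub_self]
  exact (sub_eq_zero.mp (hMs.eq_zero_of_trace_mul_self_eq_zero (by rw [hM.eq, hMtr]))).symm

end Ordered

section Field

variable {K : Type*} [Field K]

def lineProj (ω : n → K) : Matrix n n K := (ω ⬝ᵥ ω)⁻¹ • vecMulVec ω ω

theorem lineProj_apply (ω : n → K) (i j : n) : lineProj ω i j = ω i * ω j / (ω ⬝ᵥ ω) := by
  rw [lineProj, smul_apply, vecMulVec_apply, smul_eq_mul, inv_mul_eq_div]

theorem isSymm_lineProj (ω : n → K) : (lineProj ω).IsSymm := by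
  rw [IsSymm, lineProj, transpose_smul, transpose_vecMulVec]

theorem isIdempotentElem_lineProj {ω : n → K} (hω : ω ⬝ᵥ ω ≠ 0) :
    IsIdempotentElem (lineProj ω) := by
  rw [IsIdempotentElem, lineProj, smul_mul_smul, vecMulVec_mul_vecMulVec, vecMulVec_smul,
    smul_smul, mul_assoc, inv_mul_cancel₀ hω, mul_one]

theorem trace_lineProj {ω : n → K} (hω : ω ⬝ᵥ ω ≠ 0) : (lineProj ω).trace = 1 := by
  rw [lineProj, trace_smul, trace_vecMulVec, smul_eq_mul, inv_mul_cancel₀ hω]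

theorem mul_lineProj {A : Matrix n n K} {ω : n → K} (h : A *ᵥ ω = 0) : A * lineProj ω = 0 := by
  rw [lineProj, Matrix.mul_smul, mul_vecMulVec, h, zero_vecMulVec, smul_zero]

theorem lineProj_mul {A : Matrix n n K} {ω : n → K} (h : ω ᵥ* A = 0) : lineProj ω * A = 0 := by
  rw [lineProj, smul_mul, vecMulVec_mul, h, vecMulVec_zero, smul_zero]

end Field

end Matrix

theorem stmt_7 (R : Matrix (Fin 3) (Fin 3) ℝ) (hR : R.IsSymm) (hR0 : R ≠ 0)
    (h : R * R = (R.trace / 2) • R)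
    (ω : Fin 3 → ℝ) (hω : ω ≠ 0) (hRω : R.mulVec ω = 0) :
    ∀ i j, R i j = (R.trace / 2) *
      ((if i = j then (1:ℝ) else 0) - ω i * ω j / (∑ k, ω k ^ 2)) := by
  have htr : R.trace ≠ 0 := fun htr ↦
    hR0 (hR.eq_zero_of_trace_mul_self_eq_zero (by rw [h, htr, zero_div, zero_smul, trace_zero]))
  have hωω : ω ⬝ᵥ ω ≠ 0 := dotProduct_self_eq_zero.not.mpr hω
  have hωR : ω ᵥ* R = 0 := by rw [← mulVec_transpose, hR.eq, hRω]
  have hP : IsIdempotentElem ((R.trace / 2)⁻¹ • R) := by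
    rw [IsIdempotentElem, smul_mul_smul, h, smul_smul, mul_assoc,
      inv_mul_cancel₀ (div_ne_zero htr two_ne_zero), mul_one]
  have hsplit : (R.trace / 2)⁻¹ • R + lineProj ω = 1 := by
    refine add_eq_one_of_isIdempotentElem_of_trace_add_eq_card (hR.smul _) (isSymm_lineProj ω)
      hP (isIdempotentElem_lineProj hωω) ?_ ?_ ?_
    · rw [smul_mul, mul_lineProj hRω, smul_zero]
    · rw [Matrix.mul_smul, lineProj_mul hωR, smul_zero]
    · rw [trace_smul, trace_lineProj hωω, smul_eq_mul, Fintype.card_fin]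
      field_simp
      norm_num
  have hnorm : ω ⬝ᵥ ω = ∑ k, ω k ^ 2 := by simp only [dotProduct, sq]
  intro i j
  have hij := congr_fun₂ hsplit i j
  rw [Matrix.add_apply, Matrix.smul_apply, lineProj_apply, one_apply, smul_eq_mul, hnorm] at hij
  rw [← hij]
  field_simp
  ring
end

section
/- For real constants c₁ ≠ 0, c₂, c₃, the function q(x) = c₂²/(c₁²·cosh(c₂x + c₃)²) satisfies the ODE 2c₁²·q³ + q·q'' − (q')² = 0. -/
/-! The equation says `(log q)'' = -2 c₁² q`. For `q = a sech² (b x + c)` one has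
`(log q)'' = -2 b² sech² (b x + c)`, which is `-2 c₁² q` exactly when `a c₁² = b²`;
here `a = c₂² / c₁²` and `b = c₂`. -/

open Real

section SechSquared

variable (a b c : ℝ)

theorem hasDerivAt_affine_cosh (x : ℝ) :
    HasDerivAt (fun x => cosh (b * x + c)) (sinh (b * x + c) * b) x :=
  (((hasDerivAt_id x).const_mul b).add_const c).cosh.congr_deriv (by simp)

theorem hasDerivAt_affine_sinh (x : ℝ) :
    HasDerivAt (fun x => sinh (b * x + c)) (cosh (b * x + c) * b) x :=
  (((hasDerivAt_id x).const_mul b).add_const c).sinh.congr_deriv (by simp)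

theorem hasDerivAt_div_cosh_sq (x : ℝ) :
    HasDerivAt (fun x => a / cosh (b * x + c) ^ 2)
      (-2 * a * b * (sinh (b * x + c) / cosh (b * x + c) ^ 3)) x := by
  have hC := (cosh_pos (b * x + c)).ne'
  refine ((hasDerivAt_const x a).div ((hasDerivAt_affine_cosh b c x).fun_pow 2)
    (pow_ne_zero 2 hC)).congr_deriv ?_
  field_simp
  ring

theorem hasDerivAt_sinh_div_cosh_cube (x : ℝ) :
    HasDerivAt (fun x => sinh (b * x + c) / cosh (b * x + c) ^ 3)
      (b * (cosh (b * x + c) ^ 2 - 3 * sinh (b * x + c) ^ 2) / cosh (b * x + c) ^ 4) x := by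
  have hC := (cosh_pos (b * x + c)).ne'
  refine ((hasDerivAt_affine_sinh b c x).div ((hasDerivAt_affine_cosh b c x).fun_pow 3)
    (pow_ne_zero 3 hC)).congr_deriv ?_
  field_simp
  ring

theorem div_cosh_sq_mul_deriv_deriv_sub_deriv_sq (x : ℝ) :
    let q := fun x => a / cosh (b * x + c) ^ 2
    q x * deriv (deriv q) x - deriv q x ^ 2 = -2 * a ^ 2 * b ^ 2 / cosh (b * x + c) ^ 6 := by
  intro q
  have hq' : deriv q = fun x => -2 * a * b * (sinh (b * x + c) / cosh (b * x + c) ^ 3) :=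
    funext fun x => (hasDerivAt_div_cosh_sq a b c x).deriv
  have hq'' : deriv (deriv q) x =
      -2 * a * b * (b * (cosh (b * x + c) ^ 2 - 3 * sinh (b * x + c) ^ 2) / cosh (b * x + c) ^ 4) := by
    rw [hq']
    exact ((hasDerivAt_sinh_div_cosh_cube b c x).const_mul _).deriv
  have hC := (cosh_pos (b * x + c)).ne'
  rw [hq'', hq']
  simp only [q]
  field_simp
  linear_combination (-(a ^ 2 * b ^ 2)) * cosh_sq_sub_sinh_sq (b * x + c)

end SechSquared

theorem stmt_10 (c₁ c₂ c₃ : ℝ) (hc₁ : c₁ ≠ 0) (q : ℝ → ℝ)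
    (hq : q = fun x => c₂ ^ 2 / (c₁ ^ 2 * Real.cosh (c₂ * x + c₃) ^ 2)) :
    ∀ x : ℝ, 2 * c₁ ^ 2 * (q x) ^ 3 + q x * deriv (deriv q) x - (deriv q x) ^ 2 = 0 := by
  have hq : q = fun x => c₂ ^ 2 / c₁ ^ 2 / cosh (c₂ * x + c₃) ^ 2 := by
    simp only [hq, div_div]
  intro x
  have hODE := div_cosh_sq_mul_deriv_deriv_sub_deriv_sq (c₂ ^ 2 / c₁ ^ 2) c₂ c₃ x
  rw [← hq] at hODE
  rw [add_sub_assoc, hODE, hq]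
  have hC := (cosh_pos (c₂ * x + c₃)).ne'
  field_simp
  ring
end

section
/- Suppose f and q are twice differentiable real functions with f(x) = (c₁x + c₀)², f never zero and q never zero on the respective domains. Then the expression 4fq²(q'')² − 10fq(q')²q'' + 6f(q')⁴ + 2q⁴(f')²q'' − 3q³(f')²(q')² factors as 2f·(2qq'' − 3(q')²)·(2c₁²q³ + qq'' − (q')²). -/
theorem deriv_affine_sq (c₀ c₁ x : ℝ) :
    deriv (fun x => (c₁ * x + c₀) ^ 2) x = 2 * c₁ * (c₁ * x + c₀) := by
  simpa [mul_comm, mul_left_comm] using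
    ((((hasDerivAt_id x).const_mul c₁).add_const c₀).fun_pow 2).deriv

theorem deriv_affine_sq_sq (c₀ c₁ x : ℝ) :
    deriv (fun x => (c₁ * x + c₀) ^ 2) x ^ 2 = 4 * c₁ ^ 2 * (c₁ * x + c₀) ^ 2 := by
  rw [deriv_affine_sq]
  ring

theorem stmt_11_general (c₀ c₁ : ℝ) (f q : ℝ → ℝ)
    (hf : f = fun x => (c₁ * x + c₀) ^ 2) :
    ∀ x y : ℝ,
      4 * f x * (q y) ^ 2 * (deriv (deriv q) y) ^ 2
        - 10 * f x * q y * (deriv q y) ^ 2 * deriv (deriv q) y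
        + 6 * f x * (deriv q y) ^ 4
        + 2 * (q y) ^ 4 * (deriv f x) ^ 2 * deriv (deriv q) y
        - 3 * (q y) ^ 3 * (deriv f x) ^ 2 * (deriv q y) ^ 2
      = 2 * f x * (2 * q y * deriv (deriv q) y - 3 * (deriv q y) ^ 2) *
          (2 * c₁ ^ 2 * (q y) ^ 3 + q y * deriv (deriv q) y - (deriv q y) ^ 2) := by
  intro x y
  subst hf
  rw [deriv_affine_sq_sq]
  ring

theorem stmt_11 (c₀ c₁ : ℝ) (f q : ℝ → ℝ)
    (hf : f = fun x => (c₁ * x + c₀) ^ 2)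
    (hf0 : ∀ x, f x ≠ 0) (hq0 : ∀ x, q x ≠ 0)
    (hq1 : Differentiable ℝ q) (hq2 : Differentiable ℝ (deriv q)) :
    ∀ x y : ℝ,
      4 * f x * (q y) ^ 2 * (deriv (deriv q) y) ^ 2
        - 10 * f x * q y * (deriv q y) ^ 2 * deriv (deriv q) y
        + 6 * f x * (deriv q y) ^ 4
        + 2 * (q y) ^ 4 * (deriv f x) ^ 2 * deriv (deriv q) y
        - 3 * (q y) ^ 3 * (deriv f x) ^ 2 * (deriv q y) ^ 2
      = 2 * f x * (2 * q y * deriv (deriv q) y - 3 * (deriv q y) ^ 2) *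
          (2 * c₁ ^ 2 * (q y) ^ 3 + q y * deriv (deriv q) y - (deriv q y) ^ 2) :=
  stmt_11_general c₀ c₁ f q hf
end

section
/- For real constants c₁, c₂, c₃ with c₃ > 0, the function f(x) = 4c₃·cosh(c₁x + c₂)² satisfies the third order ODE f''' = (2f·f''·f' − (f')³)/f². -/
/-!
The only property of `g = cosh (c₁ x + c₂)` that matters is `g'' = c₁² g`. For any `g` with
`g'' = μ g`, the function `f = a g²` has `f' = 2a g g'`, `f'' = 2a (g'² + μ g²)` and
`f''' = 8aμ g g'`, and after multiplying by `f²` the ODE becomes a polynomial identity in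
`g, g'`; positivity of `f` lets us divide back.
-/

open Real

section SquareOfEigenfunction

variable {g g' : ℝ → ℝ} {μ : ℝ}

theorem deriv_const_mul_sq (hg : ∀ x, HasDerivAt g (g' x) x) (a : ℝ) :
    deriv (fun x => a * g x ^ 2) = fun x => 2 * a * (g x * g' x) :=
  funext fun x => (((hg x).pow 2).const_mul a).deriv.trans (by ring)

theorem deriv_deriv_const_mul_sq (hg : ∀ x, HasDerivAt g (g' x) x)
    (hg' : ∀ x, HasDerivAt g' (μ * g x) x) (a : ℝ) :
    deriv (deriv fun x => a * g x ^ 2) = fun x => 2 * a * (g' x ^ 2 + μ * g x ^ 2) := by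
  rw [deriv_const_mul_sq hg]
  exact funext fun x => (((hg x).mul (hg' x)).const_mul (2 * a)).deriv.trans (by ring)

theorem deriv_deriv_deriv_const_mul_sq (hg : ∀ x, HasDerivAt g (g' x) x)
    (hg' : ∀ x, HasDerivAt g' (μ * g x) x) (a : ℝ) :
    deriv (deriv (deriv fun x => a * g x ^ 2)) = fun x => 8 * a * μ * (g x * g' x) := by
  rw [deriv_deriv_const_mul_sq hg hg']
  exact funext fun x =>
    ((((hg' x).pow 2).add (((hg x).pow 2).const_mul μ)).const_mul (2 * a)).deriv.trans (by ring)

theorem const_mul_sq_ode (hg : ∀ x, HasDerivAt g (g' x) x)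
    (hg' : ∀ x, HasDerivAt g' (μ * g x) x) (a : ℝ) {f : ℝ → ℝ}
    (hf : f = fun x => a * g x ^ 2) (x : ℝ) :
    deriv (deriv (deriv f)) x * f x ^ 2 =
      2 * f x * deriv (deriv f) x * deriv f x - deriv f x ^ 3 := by
  subst hf
  rw [deriv_deriv_deriv_const_mul_sq hg hg', deriv_deriv_const_mul_sq hg hg',
    deriv_const_mul_sq hg]
  ring

end SquareOfEigenfunction

theorem hasDerivAt_cosh_affine (c₁ c₂ x : ℝ) :
    HasDerivAt (fun x => cosh (c₁ * x + c₂)) (c₁ * sinh (c₁ * x + c₂)) x := by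
  simpa [mul_comm] using (((hasDerivAt_id x).const_mul c₁).add_const c₂).cosh

theorem hasDerivAt_const_mul_sinh_affine (c₁ c₂ x : ℝ) :
    HasDerivAt (fun x => c₁ * sinh (c₁ * x + c₂)) (c₁ ^ 2 * cosh (c₁ * x + c₂)) x := by
  simpa [mul_comm, sq, mul_assoc] using
    ((((hasDerivAt_id x).const_mul c₁).add_const c₂).sinh).const_mul c₁

theorem stmt_14 (c₁ c₂ c₃ : ℝ) (hc₃ : 0 < c₃) (f : ℝ → ℝ)
    (hf : f = fun x => 4 * c₃ * Real.cosh (c₁ * x + c₂) ^ 2) :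
    ∀ x : ℝ, deriv (deriv (deriv f)) x =
      (2 * f x * deriv (deriv f) x * deriv f x - (deriv f x) ^ 3) / (f x) ^ 2 := by
  intro x
  have hfx : f x ≠ 0 := by
    rw [hf]
    positivity
  rw [eq_div_iff (pow_ne_zero 2 hfx)]
  exact const_mul_sq_ode (hasDerivAt_cosh_affine c₁ c₂)
    (hasDerivAt_const_mul_sinh_affine c₁ c₂) (4 * c₃) hf x
end

section
/- For real constants c₁, c₂, c₃, c₄ and m with m ≠ −1, define on an interval where f is positive, f' nonvanishing: f₁ = c₁c₂c₄m²·exp(c₃f^{m+1})·f^{(m²−m−1)/(m+1)}·(f')², f₂ = c₂f^m, f₄ = c₄·exp(c₃f^{m+1})·f^{−m/(m+1)}, f₃ = f. Then f₂ satisfies the ODE f₂'' = ((f₂f₃f₄f₁' + f₁f₃f₄f₂' − f₁f₂f₄f₃' − f₁f₂f₃f₄')·f₂')/(2f₁f₂f₃f₄), provided c₁, c₂, c₄, m are nonzero. -/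
/-!
On the interval the four coefficients satisfy the first integral `f₁ f₂ = c₁ f₃ f₄ (f₂')²`:
the exponential factors cancel, and the powers of `f` agree because
`(m² - m - 1)/(m + 1) + m = 1 - m/(m + 1) + 2(m - 1)`. Differentiating this identity and
dividing by it yields the equation for `f₂''`.
-/

open Filter Topology

theorem deriv_deriv_eq_of_mul_eq_mul_deriv_sq {g₁ g₂ g₃ g₄ : ℝ → ℝ} {c x : ℝ}
    (hg₁ : DifferentiableAt ℝ g₁ x) (hg₂ : DifferentiableAt ℝ g₂ x)
    (hg₂' : DifferentiableAt ℝ (deriv g₂) x) (hg₃ : DifferentiableAt ℝ g₃ x)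
    (hg₄ : DifferentiableAt ℝ g₄ x) (h₁ : g₁ x ≠ 0) (h₂ : g₂ x ≠ 0) (h₃ : g₃ x ≠ 0)
    (h₄ : g₄ x ≠ 0)
    (hint : (fun y => g₁ y * g₂ y) =ᶠ[𝓝 x] fun y => c * g₃ y * g₄ y * deriv g₂ y ^ 2) :
    deriv (deriv g₂) x =
      (g₂ x * g₃ x * g₄ x * deriv g₁ x + g₁ x * g₃ x * g₄ x * deriv g₂ x
        - g₁ x * g₂ x * g₄ x * deriv g₃ x - g₁ x * g₂ x * g₃ x * deriv g₄ x) * deriv g₂ x /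
      (2 * g₁ x * g₂ x * g₃ x * g₄ x) := by
  have hx : g₁ x * g₂ x = c * g₃ x * g₄ x * deriv g₂ x ^ 2 := hint.self_of_nhds
  have hd : deriv g₂ x ≠ 0 := by
    rintro h
    exact mul_ne_zero h₁ h₂ (by simp [hx, h])
  have hderiv : deriv g₁ x * g₂ x + g₁ x * deriv g₂ x =
      c * (deriv g₃ x * g₄ x + g₃ x * deriv g₄ x) * deriv g₂ x ^ 2 +
        c * g₃ x * g₄ x * (2 * deriv g₂ x * deriv (deriv g₂) x) := by
    have hl : HasDerivAt (fun y => g₁ y * g₂ y) _ x := hg₁.hasDerivAt.mul hg₂.hasDerivAt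
    have hr : HasDerivAt (fun y => c * g₃ y * g₄ y * deriv g₂ y ^ 2) _ x :=
      ((hg₃.hasDerivAt.const_mul c).mul hg₄.hasDerivAt).mul (hg₂'.hasDerivAt.pow 2)
    rw [← hl.deriv, hint.deriv_eq, hr.deriv]
    simp only [Pi.mul_apply]
    ring
  rw [eq_div_iff (by simp [*])]
  linear_combination (-(g₃ x * g₄ x * deriv g₂ x)) * hderiv +
    (2 * deriv (deriv g₂) x * g₃ x * g₄ x +
      deriv g₂ x * (g₃ x * deriv g₄ x + g₄ x * deriv g₃ x)) * hx

theorem rpow_mul_rpow_eq_mul_rpow_mul_sq {m u : ℝ} (hm : m ≠ -1) (hu : 0 < u) :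
    u ^ ((m ^ 2 - m - 1) / (m + 1)) * u ^ m = u * u ^ (-(m / (m + 1))) * (u ^ (m - 1)) ^ 2 := by
  have hm₁ : m + 1 ≠ 0 := fun h => hm (by linarith)
  calc u ^ ((m ^ 2 - m - 1) / (m + 1)) * u ^ m = u ^ ((m ^ 2 - m - 1) / (m + 1) + m) :=
        (Real.rpow_add hu _ _).symm
    _ = u ^ (1 + -(m / (m + 1)) + ((m - 1) + (m - 1))) := by congr 1; field_simp; ring
    _ = u * u ^ (-(m / (m + 1))) * (u ^ (m - 1)) ^ 2 := by
        rw [Real.rpow_add hu, Real.rpow_add hu, Real.rpow_add hu, Real.rpow_one, sq]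

theorem stmt_17 (c₁ c₂ c₃ c₄ m : ℝ) (hm : m ≠ -1)
    (hc₁ : c₁ ≠ 0) (hc₂ : c₂ ≠ 0) (hc₄ : c₄ ≠ 0) (hm0 : m ≠ 0)
    (a b : ℝ) (f : ℝ → ℝ)
    (hdiff : ∀ x ∈ Set.Ioo a b, DifferentiableAt ℝ f x ∧ DifferentiableAt ℝ (deriv f) x)
    (hpos : ∀ x ∈ Set.Ioo a b, 0 < f x)
    (hder : ∀ x ∈ Set.Ioo a b, deriv f x ≠ 0)
    (f₁ f₂ f₃ f₄ : ℝ → ℝ)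
    (hf₁ : f₁ = fun x => c₁ * c₂ * c₄ * m ^ 2 * Real.exp (c₃ * f x ^ (m + 1)) *
      f x ^ ((m ^ 2 - m - 1) / (m + 1)) * (deriv f x) ^ 2)
    (hf₂ : f₂ = fun x => c₂ * f x ^ m)
    (hf₃ : f₃ = f)
    (hf₄ : f₄ = fun x => c₄ * Real.exp (c₃ * f x ^ (m + 1)) * f x ^ (-(m / (m + 1)))) :
    ∀ x ∈ Set.Ioo a b,
      deriv (deriv f₂) x =
        (f₂ x * f₃ x * f₄ x * deriv f₁ x + f₁ x * f₃ x * f₄ x * deriv f₂ x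
          - f₁ x * f₂ x * f₄ x * deriv f₃ x - f₁ x * f₂ x * f₃ x * deriv f₄ x) * deriv f₂ x /
        (2 * f₁ x * f₂ x * f₃ x * f₄ x) := by
  intro x hx
  obtain ⟨hf, hf'⟩ := hdiff x hx
  have hfx : f x ≠ 0 := (hpos x hx).ne'
  have hfx_rpow (r : ℝ) : f x ^ r ≠ 0 := (Real.rpow_pos_of_pos (hpos x hx) r).ne'
  have hf₂' : ∀ y ∈ Set.Ioo a b,
      HasDerivAt (fun y => c₂ * f y ^ m) (c₂ * (deriv f y * m * f y ^ (m - 1))) y := fun y hy =>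
    ((hdiff y hy).1.hasDerivAt.rpow_const (Or.inl (hpos y hy).ne')).const_mul c₂
  have hderiv₂ : deriv (fun y => c₂ * f y ^ m) =ᶠ[𝓝 x]
      fun y => c₂ * (deriv f y * m * f y ^ (m - 1)) := by
    filter_upwards [isOpen_Ioo.mem_nhds hx] with y hy using (hf₂' y hy).deriv
  refine deriv_deriv_eq_of_mul_eq_mul_deriv_sq (c := c₁) ?_ ?_ ?_ ?_ ?_ ?_ ?_ ?_ ?_ ?_ <;>
    subst f₁ f₂ f₃ f₄
  · fun_prop (disch := exact hfx)
  · fun_prop (disch := exact hfx)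
  · refine DifferentiableAt.congr_of_eventuallyEq ?_ hderiv₂
    fun_prop (disch := exact hfx)
  · exact hf
  · fun_prop (disch := exact hfx)
  · simp [hc₁, hc₂, hc₄, hm0, hder x hx, hfx_rpow]
  · simp [hc₂, hfx_rpow]
  · exact hfx
  · simp [hc₄, hfx_rpow]
  · filter_upwards [isOpen_Ioo.mem_nhds hx, hderiv₂] with y hy hy'
    rw [hy']
    linear_combination (c₁ * c₂ ^ 2 * c₄ * m ^ 2 * Real.exp (c₃ * f y ^ (m + 1)) * deriv f y ^ 2) *
      rpow_mul_rpow_eq_mul_rpow_mul_sq hm (hpos y hy)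
end

section
/- Let f : I → ℝ be twice differentiable with f > 0 and f' ≠ 0 on an open interval I, let m, n be real numbers, ν := √(1 + n² + m²), and c₁, c₂, c₃ positive constants. Define f₁ = c₁c₂c₃·f^{−ν−2}·(f')², f₂ = f, f₃ = c₂f^m, f₄ = c₃f^n, λ = −((1 + n + m + ν)/4)·ln f. Then λ satisfies the ODE λ'' = (f₁(f₂f₃'f₄' + f₂'f₃f₄' + f₂'f₃'f₄) + 2λ'(f₁'f₂f₃f₄ + f₁f₂'f₃f₄ + f₁f₂f₃'f₄ + f₁f₂f₃f₄'))/(4f₁f₂f₃f₄). -/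
/-!
Write `u = f'/f` and `w = f''/f'`. Every `fᵢ` is a constant times powers of `f` and `f'`, so its
logarithmic derivative is a combination of `u` and `w` in which the constants `cᵢ` drop out:
`f₁'/f₁ = (-ν - 2) u + 2 w`, `f₂'/f₂ = u`, `f₃'/f₃ = m u`, `f₄'/f₄ = n u`; also `λ' = K u` and
`λ'' = K (w u - u²)` with `K = -(1 + n + m + ν)/4`. Dividing by `f₁ f₂ f₃ f₄`, the equation becomes
a polynomial identity in `u`, `w`, which holds because `(1 + m + n)² - ν² = 2 (m n + m + n)`.
-/

open Real Set

lemma div_prod_eq_of_logDeriv {g₁ g₂ g₃ g₄ d₁ d₂ d₃ d₄ l : ℝ}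
    (h₁ : g₁ ≠ 0) (h₂ : g₂ ≠ 0) (h₃ : g₃ ≠ 0) (h₄ : g₄ ≠ 0) :
    (g₁ * (g₂ * (d₃ * g₃) * (d₄ * g₄) + d₂ * g₂ * g₃ * (d₄ * g₄) + d₂ * g₂ * (d₃ * g₃) * g₄)
        + 2 * l * (d₁ * g₁ * g₂ * g₃ * g₄ + g₁ * (d₂ * g₂) * g₃ * g₄
          + g₁ * g₂ * (d₃ * g₃) * g₄ + g₁ * g₂ * g₃ * (d₄ * g₄))) / (4 * g₁ * g₂ * g₃ * g₄)
      = (d₂ * d₃ + d₂ * d₄ + d₃ * d₄ + 2 * l * (d₁ + d₂ + d₃ + d₄)) / 4 := by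
  field_simp
  ring

section LogDeriv

variable {f : ℝ → ℝ} {f' x : ℝ}

lemma HasDerivAt.logDeriv_const_mul_rpow (hf : HasDerivAt f f' x) (hx : f x ≠ 0) (c p : ℝ) :
    HasDerivAt (fun y => c * f y ^ p) (p * (f' / f x) * (c * f x ^ p)) x := by
  refine ((hf.rpow_const (p := p) (Or.inl hx)).const_mul c).congr_deriv ?_
  rw [rpow_sub_one hx]
  field_simp

lemma HasDerivAt.logDeriv_const_mul_rpow_mul_sq {g : ℝ → ℝ} {g' : ℝ} (hf : HasDerivAt f f' x)
    (hg : HasDerivAt g g' x) (hx : f x ≠ 0) (hgx : g x ≠ 0) (c p : ℝ) :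
    HasDerivAt (fun y => c * f y ^ p * g y ^ 2)
      ((p * (f' / f x) + 2 * (g' / g x)) * (c * f x ^ p * g x ^ 2)) x := by
  refine ((hf.logDeriv_const_mul_rpow hx c p).mul (hg.pow 2)).congr_deriv ?_
  field_simp
  simp only [Pi.pow_apply]
  ring

end LogDeriv

lemma deriv_deriv_const_mul_log {f : ℝ → ℝ} {s : Set ℝ} {x : ℝ} (hs : IsOpen s) (hx : x ∈ s)
    (hf : ∀ y ∈ s, DifferentiableAt ℝ f y) (hne : ∀ y ∈ s, f y ≠ 0)
    (hf' : DifferentiableAt ℝ (deriv f) x) (K : ℝ) :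
    deriv (deriv fun y => K * log (f y)) x
      = K * ((deriv (deriv f) x * f x - deriv f x * deriv f x) / f x ^ 2) := by
  have hfirst : deriv (fun y => K * log (f y)) =ᶠ[nhds x] fun y => K * (deriv f y / f y) :=
    Filter.eventuallyEq_of_mem (hs.mem_nhds hx) fun y hy =>
      (((hf y hy).hasDerivAt.log (hne y hy)).const_mul K).deriv
  rw [hfirst.deriv_eq]
  exact ((hf'.hasDerivAt.div (hf x hx).hasDerivAt (hne x hx)).const_mul K).deriv

theorem stmt_18 (m n c₁ c₂ c₃ : ℝ) (hc₁ : 0 < c₁) (hc₂ : 0 < c₂) (hc₃ : 0 < c₃)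
    (ν : ℝ) (hν : ν = Real.sqrt (1 + n ^ 2 + m ^ 2))
    (a b : ℝ) (f : ℝ → ℝ)
    (hdiff : ∀ x ∈ Set.Ioo a b, DifferentiableAt ℝ f x ∧ DifferentiableAt ℝ (deriv f) x)
    (hpos : ∀ x ∈ Set.Ioo a b, 0 < f x)
    (hder : ∀ x ∈ Set.Ioo a b, deriv f x ≠ 0)
    (f₁ f₂ f₃ f₄ lam : ℝ → ℝ)
    (hf₁ : f₁ = fun x => c₁ * c₂ * c₃ * f x ^ (-ν - 2) * (deriv f x) ^ 2)
    (hf₂ : f₂ = f)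
    (hf₃ : f₃ = fun x => c₂ * f x ^ m)
    (hf₄ : f₄ = fun x => c₃ * f x ^ n)
    (hlam : lam = fun x => -((1 + n + m + ν) / 4) * Real.log (f x)) :
    ∀ x ∈ Set.Ioo a b,
      deriv (deriv lam) x =
        (f₁ x * (f₂ x * deriv f₃ x * deriv f₄ x + deriv f₂ x * f₃ x * deriv f₄ x
            + deriv f₂ x * deriv f₃ x * f₄ x)
          + 2 * deriv lam x * (deriv f₁ x * f₂ x * f₃ x * f₄ x
            + f₁ x * deriv f₂ x * f₃ x * f₄ x + f₁ x * f₂ x * deriv f₃ x * f₄ x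
            + f₁ x * f₂ x * f₃ x * deriv f₄ x)) /
        (4 * f₁ x * f₂ x * f₃ x * f₄ x) := by
  intro x hx
  have hfpos : 0 < f x := hpos x hx
  have hfx : f x ≠ 0 := hfpos.ne'
  have hd : deriv f x ≠ 0 := hder x hx
  have hF := (hdiff x hx).1.hasDerivAt
  have hF' := (hdiff x hx).2.hasDerivAt
  have hν2 : ν ^ 2 = 1 + n ^ 2 + m ^ 2 := by
    rw [hν, sq_sqrt]
    positivity
  set u := deriv f x / f x
  set w := deriv (deriv f) x / deriv f x
  have hd₁ : HasDerivAt f₁ (((-ν - 2) * u + 2 * w) * f₁ x) x := by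
    subst hf₁
    exact hF.logDeriv_const_mul_rpow_mul_sq hF' hfx hd _ _
  have hd₂ : HasDerivAt f₂ (u * f₂ x) x := by rwa [hf₂, div_mul_cancel₀ _ hfx]
  have hd₃ : HasDerivAt f₃ (m * u * f₃ x) x := hf₃ ▸ hF.logDeriv_const_mul_rpow hfx c₂ m
  have hd₄ : HasDerivAt f₄ (n * u * f₄ x) x := hf₄ ▸ hF.logDeriv_const_mul_rpow hfx c₃ n
  have hlam' : deriv lam x = -((1 + n + m + ν) / 4) * u := by
    subst hlam
    exact ((hF.log hfx).const_mul _).deriv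
  have hlam'' : deriv (deriv lam) x = -((1 + n + m + ν) / 4) * (w * u - u ^ 2) := by
    rw [hlam, deriv_deriv_const_mul_log isOpen_Ioo hx (fun y hy => (hdiff y hy).1)
      (fun y hy => (hpos y hy).ne') (hdiff x hx).2]
    simp only [u, w]
    field_simp
  have hne₁ : f₁ x ≠ 0 := by rw [hf₁]; positivity
  have hne₂ : f₂ x ≠ 0 := by rw [hf₂]; exact hfx
  have hne₃ : f₃ x ≠ 0 := by rw [hf₃]; positivity
  have hne₄ : f₄ x ≠ 0 := by rw [hf₄]; positivity
  rw [hd₁.deriv, hd₂.deriv, hd₃.deriv, hd₄.deriv, div_prod_eq_of_logDeriv hne₁ hne₂ hne₃ hne₄,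
    hlam'', hlam']
  linear_combination (-u ^ 2 / 8) * hν2
end
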